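/- Let T_i be a perfect Roman domination stable tree and let u ∈ W(T_i). If T_{i+1} is the tree obtained from T_i by adding three new vertices v_1, v_2, v_3, the path edges v_3v_2 and v_2v_1, and the edge uv_3 (Operation O_1), then T_{i+1} is a perfect Roman domination stable tree. -/

import Mathlib

open SimpleGraph

/-- A perfect Roman dominating function: values in {0,1,2}, and every vertex with
value 0 has exactly one neighbor with value 2. -/
def IsPRDF {V : Type*} (G : SimpleGraph V) (f : V → ℕ) : Prop :=
  (∀ v, f v ≤ 2) ∧ ∀ u, f u = 0 → ∃! v, G.Adj u v ∧ f v = 2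

/-- The perfect Roman domination number: minimum weight of a PRDF. -/
noncomputable def prdn {V : Type*} [Fintype V] (G : SimpleGraph V) : ℕ :=
  sInf {w | ∃ f : V → ℕ, IsPRDF G f ∧ ∑ v, f v = w}

/-- A graph is perfect Roman domination stable if removing any vertex
leaves the perfect Roman domination number unchanged. -/
noncomputable def Stable {V : Type*} [Fintype V] [DecidableEq V] (G : SimpleGraph V) : Prop :=
  ∀ v : V, prdn (G.induce {u | u ≠ v}) = prdn G

/-- The set of vertices receiving 0 under every minimum-weight PRDF. -/
def Wset {V : Type*} [Fintype V] (G : SimpleGraph V) : Set V :=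
  {u | ∀ f : V → ℕ, IsPRDF G f → (∑ v, f v) = prdn G → f u = 0}

/-- Degree of a vertex. -/
noncomputable def deg {V : Type*} (G : SimpleGraph V) (v : V) : ℕ := (G.neighborSet v).ncard

/-!
Write `T'` as `T` glued to the path `v₁ v₂ v₃` by the edge `u v₃`. Gluing a pendant `P₃` at one
vertex raises `γ_R^p` by exactly `2`: a `γ_R^p`-function extends by `0, 2, 0`, or by `2, 0, 0`
when the attaching vertex has value `2`; conversely, a PRDF of the glued graph restricts to a PRDF
of the old one once the attaching vertex is raised from `0` to `1` if it relied on `v₃` for its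
`2`, and this raise is needed only when the path carries weight at least `3`. By stability of `T`
this settles `T'` and `T' - x` for `x ∈ V(T)`. Deleting a vertex of the path leaves `T` attached
at `u` to two vertices, which cost less than `2` only when `u` is nonzero; as `u ∈ W(T)`, a PRDF
of `T` that is nonzero at `u` has weight at least `γ_R^p(T) + 1`.
-/

section PRDF

variable {V W : Type*} {G : SimpleGraph V} {H : SimpleGraph W} {f : V → ℕ}

theorem IsPRDF.prdn_le [Fintype V] (hf : IsPRDF G f) : prdn G ≤ ∑ v, f v :=
  Nat.sInf_le ⟨f, hf, rfl⟩

theorem exists_isPRDF_sum_eq_prdn [Fintype V] (G : SimpleGraph V) :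
    ∃ f, IsPRDF G f ∧ ∑ v, f v = prdn G := by
  have one : IsPRDF G fun _ => 1 := ⟨fun _ => one_le_two, fun _ h => absurd h one_ne_zero⟩
  exact Nat.sInf_mem (s := {w | ∃ f : V → ℕ, IsPRDF G f ∧ ∑ v, f v = w})
    ⟨_, _, one, rfl⟩

theorem IsPRDF.exists_adj_eq_two (hf : IsPRDF G f) {v : V} (hv : f v = 0) :
    ∃ w, G.Adj v w ∧ f w = 2 :=
  (hf.2 v hv).exists

theorem prdn_lt_sum_of_mem_Wset [Fintype V] {u : V} (hu : u ∈ Wset G) (hf : IsPRDF G f)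
    (hfu : f u ≠ 0) : prdn G < ∑ v, f v :=
  hf.prdn_le.lt_of_ne fun h => hfu (hu f hf h.symm)

theorem IsPRDF.comp_iso {g : W → ℕ} (e : G ≃g H) (hg : IsPRDF H g) : IsPRDF G (g ∘ e) := by
  refine ⟨fun v => hg.1 (e v), fun v hv => ?_⟩
  obtain ⟨w, hw, huniq⟩ := hg.2 (e v) hv
  refine ⟨e.symm w, by simpa [← e.map_adj_iff] using hw, fun v' hv' => ?_⟩
  rw [← huniq (e v') (by simpa [e.map_adj_iff] using hv'), e.symm_apply_apply]

theorem SimpleGraph.Iso.prdn_le [Fintype V] [Fintype W] (e : G ≃g H) : prdn G ≤ prdn H := by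
  obtain ⟨g, hg, hsum⟩ := exists_isPRDF_sum_eq_prdn H
  calc prdn G ≤ ∑ v, g (e v) := (hg.comp_iso e).prdn_le
    _ = prdn H := (e.toEquiv.sum_comp g).trans hsum

theorem SimpleGraph.Iso.prdn_eq [Fintype V] [Fintype W] (e : G ≃g H) : prdn G = prdn H :=
  e.prdn_le.antisymm e.symm.prdn_le

end PRDF

namespace SimpleGraph

variable {V α : Type*}

def glue (G : SimpleGraph V) (H : SimpleGraph α) (r : V → α → Prop) :
    SimpleGraph (V ⊕ α) where
  Adj
    | .inl x, .inl y => G.Adj x y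
    | .inr i, .inr j => H.Adj i j
    | .inl x, .inr i => r x i
    | .inr i, .inl x => r x i
  symm := ⟨by rintro (x | i) (y | j) h <;> first | exact h.symm | exact h⟩
  loopless := ⟨by
    rintro (x | i) h
    exacts [G.loopless.irrefl x h, H.loopless.irrefl i h]⟩

variable {G : SimpleGraph V} {H : SimpleGraph α} {r : V → α → Prop}

@[simp] theorem glue_adj_inl_inl {x y : V} : (glue G H r).Adj (.inl x) (.inl y) ↔ G.Adj x y :=
  Iff.rfl
@[simp] theorem glue_adj_inr_inr {i j : α} : (glue G H r).Adj (.inr i) (.inr j) ↔ H.Adj i j :=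
  Iff.rfl
@[simp] theorem glue_adj_inl_inr {x : V} {i : α} : (glue G H r).Adj (.inl x) (.inr i) ↔ r x i :=
  Iff.rfl
@[simp] theorem glue_adj_inr_inl {x : V} {i : α} : (glue G H r).Adj (.inr i) (.inl x) ↔ r x i :=
  Iff.rfl

variable (G)

def glueInduceNeInlIso [DecidableEq V] (H : SimpleGraph α) (r : V → α → Prop) (x : V) :
    glue (G.induce {y | y ≠ x}) H (fun y i => r y i) ≃g
      (glue G H r).induce {z | z ≠ .inl x} where
  toEquiv := (Equiv.sumCongr (Equiv.subtypeEquivRight fun _ => Sum.inl_injective.ne_iff.symm)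
    (Equiv.subtypeUnivEquiv fun _ => Sum.inr_ne_inl).symm).trans
    (Equiv.subtypeSum (p := fun z : V ⊕ α => z ≠ .inl x)).symm
  map_rel_iff' := by rintro (a | i) (b | j) <;> rfl

def glueInduceNeInrIso {n : ℕ} (H : SimpleGraph (Fin (n + 1))) (r : V → Fin (n + 1) → Prop)
    (j : Fin (n + 1)) :
    glue G (H.comap j.succAbove) (fun x i => r x (j.succAbove i)) ≃g
      (glue G H r).induce {z | z ≠ .inr j} where
  toEquiv := (Equiv.sumCongr (Equiv.subtypeUnivEquiv fun _ => Sum.inl_ne_inr).symm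
    ((finSuccAboveEquiv j).trans
      (Equiv.subtypeEquivRight fun _ => Sum.inr_injective.ne_iff.symm))).trans
    (Equiv.subtypeSum (p := fun z : V ⊕ Fin (n + 1) => z ≠ .inr j)).symm
  map_rel_iff' := by rintro (a | i) (b | k) <;> rfl

end SimpleGraph

section Glue

open SimpleGraph

variable {V α : Type*} {G : SimpleGraph V} {H : SimpleGraph α} {r : V → α → Prop}
  {f : V → ℕ} {k : α → ℕ} {g : V ⊕ α → ℕ}

theorem IsPRDF.sumElim (hf : IsPRDF G f) (hk : ∀ i, k i ≤ 2)
    (hleft : ∀ x i, r x i → f x = 0 → k i ≠ 2)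
    (hright : ∀ i, k i = 0 → ∃! v, (glue G H r).Adj (.inr i) v ∧ Sum.elim f k v = 2) :
    IsPRDF (glue G H r) (Sum.elim f k) := by
  refine ⟨by rintro (x | i); exacts [hf.1 x, hk i], ?_⟩
  rintro (x | i) h0
  · obtain ⟨y, hy, huniq⟩ := hf.2 x h0
    refine ⟨.inl y, hy, ?_⟩
    rintro (y' | j) ⟨hadj, h2⟩
    · exact congrArg Sum.inl (huniq y' ⟨hadj, h2⟩)
    · exact absurd h2 (hleft x j hadj h0)
  · exact hright i h0

theorem IsPRDF.exists_adj_eq_two_of_inr (hg : IsPRDF (glue G H r) g) {i : α}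
    (hi : g (.inr i) = 0) :
    (∃ x, r x i ∧ g (.inl x) = 2) ∨ ∃ j, H.Adj i j ∧ g (.inr j) = 2 := by
  obtain ⟨x | j, hv, h2⟩ := hg.exists_adj_eq_two hi
  exacts [.inl ⟨x, hv, h2⟩, .inr ⟨j, hv, h2⟩]

open Classical in
/-- Restriction of `g` to `G`, where a vertex of `G` that relied on `H` for its
neighbour of value `2` is raised from `0` to `1`. -/
noncomputable def glueRestrict (r : V → α → Prop) (g : V ⊕ α → ℕ) (x : V) : ℕ :=
  g (.inl x) + if g (.inl x) = 0 ∧ ∃ i, r x i ∧ g (.inr i) = 2 then 1 else 0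

theorem glueRestrict_eq_two_iff {x : V} : glueRestrict r g x = 2 ↔ g (.inl x) = 2 := by
  unfold glueRestrict
  split_ifs with h <;> omega

theorem IsPRDF.of_glue (hg : IsPRDF (glue G H r) g) : IsPRDF G (glueRestrict r g) := by
  refine ⟨fun x => ?_, fun x hx => ?_⟩
  · have := hg.1 (.inl x)
    unfold glueRestrict
    split_ifs with h <;> omega
  · unfold glueRestrict at hx
    split_ifs at hx with hB
    rw [Nat.add_zero] at hx
    obtain ⟨y | i, ⟨hadj, h2⟩, huniq⟩ := hg.2 (.inl x) hx
    · refine ⟨y, ⟨hadj, glueRestrict_eq_two_iff.2 h2⟩, fun y' ⟨hadj', h2'⟩ => ?_⟩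
      exact Sum.inl_injective (huniq (.inl y') ⟨hadj', glueRestrict_eq_two_iff.1 h2'⟩)
    · exact absurd ⟨hx, i, hadj, h2⟩ hB

end Glue

section GlueBounds

open SimpleGraph Finset

variable {V α : Type*} [Fintype V] {G : SimpleGraph V} {H : SimpleGraph α}
  {r : V → α → Prop} {g : V ⊕ α → ℕ}

theorem IsPRDF.prdn_le_sum_inl (hg : IsPRDF (glue G H r) g)
    (hr : ∀ x i, r x i → g (.inr i) ≠ 2) : prdn G ≤ ∑ x, g (.inl x) := by
  have hres : glueRestrict r g = fun x => g (.inl x) :=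
    funext fun x => by simpa [glueRestrict] using fun _ i => hr x i
  simpa [hres] using hg.of_glue.prdn_le

theorem IsPRDF.prdn_le_sum_inl_add_one (hg : IsPRDF (glue G H r) g)
    (hr : ∀ x y i j, r x i → r y j → x = y) : prdn G ≤ ∑ x, g (.inl x) + 1 := by
  classical
  calc prdn G ≤ ∑ x, glueRestrict r g x := hg.of_glue.prdn_le
    _ = ∑ x, g (.inl x) + #{x | g (.inl x) = 0 ∧ ∃ i, r x i ∧ g (.inr i) = 2} := by
      simp only [glueRestrict, sum_add_distrib, sum_boole, Nat.cast_id]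
    _ ≤ ∑ x, g (.inl x) + 1 := by
      gcongr
      refine card_le_one.2 fun x hx y hy => ?_
      simp only [mem_filter] at hx hy
      obtain ⟨i, hi, -⟩ := hx.2.2
      obtain ⟨j, hj, -⟩ := hy.2.2
      exact hr x y i j hi hj

theorem IsPRDF.prdn_add_min_le_sum_inl (hg : IsPRDF (glue G H r) g) {u : V}
    (hr : ∀ x i, r x i → x = u) (hu : u ∈ Wset G) :
    prdn G + min (g (.inl u)) 1 ≤ ∑ x, g (.inl x) := by
  classical
  by_cases hB : g (.inl u) = 0 ∧ ∃ i, r u i ∧ g (.inr i) = 2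
  · have hres : ∀ x, glueRestrict r g x = g (.inl x) + if x = u then 1 else 0 := by
      intro x
      by_cases hx : x = u
      · subst hx; simp [glueRestrict, hB]
      · rw [glueRestrict, if_neg hx, if_neg]
        rintro ⟨-, i, hri, -⟩
        exact hx (hr x i hri)
    have := prdn_lt_sum_of_mem_Wset hu hg.of_glue (by simp [hres])
    simp only [hres, sum_add_distrib, sum_ite_eq', mem_univ, if_true] at this
    omega
  · have hres : glueRestrict r g = fun x => g (.inl x) := by
      funext x
      rw [glueRestrict, if_neg, add_zero]
      rintro ⟨h0, i, hri, h2⟩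
      obtain rfl := hr x i hri
      exact hB ⟨h0, i, hri, h2⟩
    have hle : prdn G ≤ ∑ x, g (.inl x) := by simpa [hres] using hg.of_glue.prdn_le
    by_cases h0 : g (.inl u) = 0
    · simpa [h0] using hle
    · have := prdn_lt_sum_of_mem_Wset hu hg.of_glue (by rwa [hres])
      simp only [hres] at this
      omega

end GlueBounds

section Pendant

open SimpleGraph

variable {V : Type*} [Fintype V] {G : SimpleGraph V}

theorem prdn_glue_fin_two {r : V → Fin 2 → Prop} (H : SimpleGraph (Fin 2)) {u : V}
    (hr : ∀ x i, r x i → x = u ∧ i = 1) (hu : u ∈ Wset G) :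
    prdn (glue G H r) = prdn G + 2 := by
  refine le_antisymm ?_ ?_
  · obtain ⟨f, hf, hsum⟩ := exists_isPRDF_sum_eq_prdn G
    have hF : IsPRDF (glue G H r) (Sum.elim f 1) :=
      hf.sumElim (fun _ => one_le_two) (fun _ _ _ _ => by simp) (fun _ h => absurd h one_ne_zero)
    simpa [Fintype.sum_sum_type, hsum] using hF.prdn_le
  · obtain ⟨g, hg, hsum⟩ := exists_isPRDF_sum_eq_prdn (glue G H r)
    have hleft := hg.prdn_add_min_le_sum_inl (fun x i h => (hr x i h).1) hu
    have h0 : g (.inr 0) = 0 → g (.inr 1) = 2 := by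
      intro h
      rcases hg.exists_adj_eq_two_of_inr h with ⟨x, hx, -⟩ | ⟨j, hj, h2⟩
      · exact absurd (hr x 0 hx).2 (by decide)
      · fin_cases j
        exacts [absurd hj (H.loopless.irrefl 0), h2]
    have h1 : g (.inr 1) = 0 → g (.inr 0) = 2 ∨ g (.inl u) = 2 := by
      intro h
      rcases hg.exists_adj_eq_two_of_inr h with ⟨x, hx, h2⟩ | ⟨j, hj, h2⟩
      · exact .inr ((hr x 1 hx).1 ▸ h2)
      · fin_cases j
        exacts [.inl h2, absurd hj (H.loopless.irrefl 1)]
    rw [← hsum, Fintype.sum_sum_type, Fin.sum_univ_two]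
    omega

theorem prdn_glue_pathGraph_three_le {r : V → Fin 3 → Prop} (hr2 : ∀ x i, r x i → i = 2)
    (hr : ∀ x y i j, r x i → r y j → x = y) :
    prdn (glue G (pathGraph 3) r) ≤ prdn G + 2 := by
  obtain ⟨f, hf, hsum⟩ := exists_isPRDF_sum_eq_prdn G
  suffices ∃ k : Fin 3 → ℕ,
      ∑ i, k i = 2 ∧ IsPRDF (glue G (pathGraph 3) r) (Sum.elim f k) by
    obtain ⟨k, hk, hF⟩ := this
    simpa [Fintype.sum_sum_type, hsum, hk] using hF.prdn_le
  have hleft (k : Fin 3 → ℕ) (hk : k 2 = 0) : ∀ x i, r x i → f x = 0 → k i ≠ 2 := by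
    intro x i hri _
    rw [hr2 x i hri, hk]
    decide
  by_cases hx : ∃ x, r x 2 ∧ f x = 2
  · obtain ⟨x₀, hx₀⟩ := hx
    refine ⟨![2, 0, 0], rfl, hf.sumElim (by decide) (hleft _ rfl) ?_⟩
    intro i hi
    fin_cases i
    · simp at hi
    · refine ⟨.inr 0, ⟨by simp [pathGraph_adj], rfl⟩, ?_⟩
      rintro (x | j) ⟨hadj, h2⟩
      · exact absurd (hr2 x 1 hadj) (by decide)
      · fin_cases j <;> simp_all [pathGraph_adj]
    · refine ⟨.inl x₀, hx₀, ?_⟩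
      rintro (x | j) ⟨hadj, h2⟩
      · exact congrArg Sum.inl (hr x x₀ 2 2 hadj hx₀.1)
      · fin_cases j <;> simp_all [pathGraph_adj]
  · refine ⟨![0, 2, 0], rfl, hf.sumElim (by decide) (hleft _ rfl) ?_⟩
    intro i hi
    fin_cases i
    · refine ⟨.inr 1, ⟨by simp [pathGraph_adj], rfl⟩, ?_⟩
      rintro (x | j) ⟨hadj, h2⟩
      · exact absurd (hr2 x 0 hadj) (by decide)
      · fin_cases j <;> simp_all [pathGraph_adj]
    · simp at hi
    · refine ⟨.inr 1, ⟨by simp [pathGraph_adj], rfl⟩, ?_⟩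
      rintro (x | j) ⟨hadj, h2⟩
      · exact absurd ⟨x, hadj, h2⟩ hx
      · fin_cases j <;> simp_all [pathGraph_adj]

theorem prdn_add_two_le_prdn_glue_pathGraph_three {r : V → Fin 3 → Prop}
    (hr2 : ∀ x i, r x i → i = 2) (hr : ∀ x y i j, r x i → r y j → x = y) :
    prdn G + 2 ≤ prdn (glue G (pathGraph 3) r) := by
  obtain ⟨g, hg, hsum⟩ := exists_isPRDF_sum_eq_prdn (glue G (pathGraph 3) r)
  have h0 : g (.inr 0) = 0 → g (.inr 1) = 2 := by
    intro h
    rcases hg.exists_adj_eq_two_of_inr h with ⟨x, hx, -⟩ | ⟨j, hj, h2⟩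
    · exact absurd (hr2 x 0 hx) (by decide)
    · fin_cases j <;> simp_all [pathGraph_adj]
  have h1 : g (.inr 1) = 0 → g (.inr 0) = 2 ∨ g (.inr 2) = 2 := by
    intro h
    rcases hg.exists_adj_eq_two_of_inr h with ⟨x, hx, -⟩ | ⟨j, hj, h2⟩
    · exact absurd (hr2 x 1 hx) (by decide)
    · fin_cases j <;> simp_all [pathGraph_adj]
  rw [← hsum, Fintype.sum_sum_type, Fin.sum_univ_three]
  by_cases h2 : g (.inr 2) = 2
  · have := hg.prdn_le_sum_inl_add_one hr
    omega
  · have := hg.prdn_le_sum_inl fun x i hri => hr2 x i hri ▸ h2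
    omega

theorem prdn_glue_pathGraph_three {r : V → Fin 3 → Prop} (hr2 : ∀ x i, r x i → i = 2)
    (hr : ∀ x y i j, r x i → r y j → x = y) :
    prdn (glue G (pathGraph 3) r) = prdn G + 2 :=
  (prdn_glue_pathGraph_three_le hr2 hr).antisymm (prdn_add_two_le_prdn_glue_pathGraph_three hr2 hr)

end Pendant

/-- The new path is `u - inr 2 - inr 1 - inr 0`, that is `vᵢ = inr (i - 1)`. -/
theorem stmt6_general {V : Type*} [Fintype V] [DecidableEq V] (T : SimpleGraph V)
    (hstab : Stable T) (u : V) (hu : u ∈ Wset T)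
    (T' : SimpleGraph (V ⊕ Fin 3))
    (hadj : ∀ a b : V ⊕ Fin 3, T'.Adj a b ↔
      ((∃ x y : V, a = Sum.inl x ∧ b = Sum.inl y ∧ T.Adj x y) ∨
       (a = Sum.inl u ∧ b = Sum.inr 2) ∨ (a = Sum.inr 2 ∧ b = Sum.inl u) ∨
       (a = Sum.inr 2 ∧ b = Sum.inr 1) ∨ (a = Sum.inr 1 ∧ b = Sum.inr 2) ∨
       (a = Sum.inr 1 ∧ b = Sum.inr 0) ∨ (a = Sum.inr 0 ∧ b = Sum.inr 1))) :
    Stable T' := by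
  obtain rfl : T' = T.glue (pathGraph 3) (fun x i => x = u ∧ i = 2) := by
    ext a b
    rw [hadj]
    rcases a with x | i <;> rcases b with y | j <;> simp [pathGraph_adj, and_comm]
    fin_cases i <;> fin_cases j <;> simp
  have hprdn : prdn (T.glue (pathGraph 3) fun x i => x = u ∧ i = 2) = prdn T + 2 :=
    prdn_glue_pathGraph_three (fun _ _ h => h.2) (fun _ _ _ _ h h' => h.1.trans h'.1.symm)
  intro w
  rw [hprdn]
  rcases w with x | j
  · rw [← (glueInduceNeInlIso T _ _ x).prdn_eq, ← hstab x]
    exact prdn_glue_pathGraph_three (fun _ _ h => h.2)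
      (fun _ _ _ _ h h' => Subtype.ext (h.1.trans h'.1.symm))
  · rw [← (glueInduceNeInrIso T _ _ j).prdn_eq]
    refine prdn_glue_fin_two _ (fun x i h => ⟨h.1, ?_⟩) hu
    fin_cases j <;> fin_cases i <;> simp_all

/-- Operation O₁ (attaching a pendant path `u - v₃ - v₂ - v₁` at a
vertex `u ∈ W(Tᵢ)`, with v₁ = inr 0, v₂ = inr 1, v₃ = inr 2) applied to a
perfect Roman domination stable tree yields a perfect Roman domination stable tree. -/
theorem stmt6 {V : Type*} [Fintype V] [DecidableEq V] (T : SimpleGraph V)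
    (hT : T.IsTree) (hstab : Stable T) (u : V) (hu : u ∈ Wset T)
    (T' : SimpleGraph (V ⊕ Fin 3))
    (hadj : ∀ a b : V ⊕ Fin 3, T'.Adj a b ↔
      ((∃ x y : V, a = Sum.inl x ∧ b = Sum.inl y ∧ T.Adj x y) ∨
       (a = Sum.inl u ∧ b = Sum.inr 2) ∨ (a = Sum.inr 2 ∧ b = Sum.inl u) ∨
       (a = Sum.inr 2 ∧ b = Sum.inr 1) ∨ (a = Sum.inr 1 ∧ b = Sum.inr 2) ∨
       (a = Sum.inr 1 ∧ b = Sum.inr 0) ∨ (a = Sum.inr 0 ∧ b = Sum.inr 1))) :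
    Stable T' :=
  stmt6_general T hstab u hu T' hadj
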